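/- Let |q|<1, and let B_N denote the N-th denominator convergent of H(a,b,c,d,q), defined by B_0 = 1, B_1 = 1, B_{N+1} = (a+b+dq^N)B_N + (-ab+cq^N)B_{N-1} for N ≥ 1, and let A_N be as in the numerator recurrence with A_0 = 0, A_1 = 1. Then for N ≥ 2, B_N = A_N + (cq - ab) · Σ_{j,l,n≥0} a^j b^{N-2-n-j-l} c^l d^{n-l} q^{n(n+3)/2 + l(l+1)/2} [n+j choose j]_q [N-2-j-l choose n]_q [n choose l]_q. -/

import Mathlib

/-!
Put `D_N = B_N - A_N`. It satisfies the same recurrence, with `D_0 = 1` and `D_1 = 0`, so it is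
enough to show that the triple sum `g_m` satisfies
`g_{m+2} = (a + b + d q^{m+3}) g_{m+1} + (-ab + c q^{m+3}) g_m`, `g_0 = 1`, `g_1 = a + b + d q²`.

The sum `g_m` is the coefficient of `X^m` in `Γ(X) = ∑ₙ Tₙ(X)` (`seriesSum`, `seriesTerm`) with
`Tₙ(X) = q^{n(n+3)/2} Xⁿ Rₙ(X) Uₙ(aX) Uₙ(bX)`, where `Uₙ(aX) = ∑ⱼ aʲ [n+j, j]_q Xʲ`
(`pochhammerInvSeries`) and `Rₙ(X) = ∑ₗ cˡ d^{n-l} q^{l(l+1)/2} [n, l]_q Xˡ` (`qBinomialSeries`).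
By Pascal's rule `(1 - aX) U_{n+1}(aX) = Uₙ(aqX)` and `R_{n+1}(X) = (d + cqX) Rₙ(qX)`, hence
`(1 - aX)(1 - bX) T_{n+1}(X) = q² X (d + cqX) Tₙ(qX)`, while `(1 - aX)(1 - bX) T₀ = 1`. Summing
over `n`, `(1 - aX)(1 - bX) Γ(X) = 1 + q² X (d + cqX) Γ(qX)`, and comparing coefficients gives the
recurrence.
-/

open Finset PowerSeries

noncomputable def qbinom (q : ℂ) (n m : ℕ) : ℂ :=
  if m ≤ n then
    (∏ k ∈ range n, (1 - q ^ (k + 1))) /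
      ((∏ k ∈ range m, (1 - q ^ (k + 1))) * ∏ k ∈ range (n - m), (1 - q ^ (k + 1)))
  else 0

noncomputable def qPochhammer (q : ℂ) (n : ℕ) : ℂ := ∏ k ∈ range n, (1 - q ^ (k + 1))

lemma qPochhammer_zero (q : ℂ) : qPochhammer q 0 = 1 := prod_range_zero _

lemma qPochhammer_succ (q : ℂ) (n : ℕ) :
    qPochhammer q (n + 1) = qPochhammer q n * (1 - q ^ (n + 1)) :=
  prod_range_succ _ _

lemma qPochhammer_ne_zero {q : ℂ} (hq : ∀ k : ℕ, q ^ (k + 1) ≠ 1) (n : ℕ) :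
    qPochhammer q n ≠ 0 :=
  prod_ne_zero_iff.2 fun k _ => sub_ne_zero.2 (hq k).symm

lemma qbinom_of_le (q : ℂ) {n m : ℕ} (h : m ≤ n) :
    qbinom q n m = qPochhammer q n / (qPochhammer q m * qPochhammer q (n - m)) :=
  if_pos h

lemma qbinom_of_lt (q : ℂ) {n m : ℕ} (h : n < m) : qbinom q n m = 0 :=
  if_neg (Nat.not_le.2 h)

lemma qbinom_zero_right {q : ℂ} (hq : ∀ k : ℕ, q ^ (k + 1) ≠ 1) (n : ℕ) : qbinom q n 0 = 1 := by
  rw [qbinom_of_le q n.zero_le, Nat.sub_zero, qPochhammer_zero, one_mul,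
    div_self (qPochhammer_ne_zero hq n)]

lemma qbinom_self {q : ℂ} (hq : ∀ k : ℕ, q ^ (k + 1) ≠ 1) (n : ℕ) : qbinom q n n = 1 := by
  rw [qbinom_of_le q le_rfl, Nat.sub_self, qPochhammer_zero, mul_one,
    div_self (qPochhammer_ne_zero hq n)]

lemma qbinom_add_symm (q : ℂ) (n m : ℕ) : qbinom q (n + m) n = qbinom q (n + m) m := by
  rw [qbinom_of_le q (Nat.le_add_right n m), qbinom_of_le q (Nat.le_add_left m n),
    Nat.add_sub_cancel_left, Nat.add_sub_cancel, mul_comm]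

lemma qbinom_succ_succ {q : ℂ} (hq : ∀ k : ℕ, q ^ (k + 1) ≠ 1) (n m : ℕ) :
    qbinom q (n + 1) (m + 1) = qbinom q n m + q ^ (m + 1) * qbinom q n (m + 1) := by
  rcases lt_trichotomy n m with h | rfl | h
  · rw [qbinom_of_lt q (by omega), qbinom_of_lt q h, qbinom_of_lt q (by omega), mul_zero,
      add_zero]
  · rw [qbinom_self hq, qbinom_self hq, qbinom_of_lt q (Nat.lt_succ_self n), mul_zero, add_zero]
  · obtain ⟨s, rfl⟩ : ∃ s, n = m + 1 + s := ⟨n - m - 1, by omega⟩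
    rw [qbinom_of_le q (by omega), qbinom_of_le q (by omega), qbinom_of_le q (by omega),
      show m + 1 + s + 1 - (m + 1) = s + 1 by omega, show m + 1 + s - m = s + 1 by omega,
      show m + 1 + s - (m + 1) = s by omega, qPochhammer_succ q (m + 1 + s),
      qPochhammer_succ q m, qPochhammer_succ q s]
    have hP := qPochhammer_ne_zero hq
    have hm := sub_ne_zero.2 (hq m).symm
    have hs := sub_ne_zero.2 (hq s).symm
    field_simp [hP m, hP s, hP (m + 1 + s)]
    ring

lemma triangle_succ (l : ℕ) : (l + 1) * (l + 1 + 1) / 2 = l * (l + 1) / 2 + (l + 1) := by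
  rw [show (l + 1) * (l + 1 + 1) = l * (l + 1) + 2 * (l + 1) by ring,
    Nat.add_mul_div_left _ _ two_pos]

lemma rescale_C {R : Type*} [CommSemiring R] (a r : R) : rescale a (C r) = C r := by
  ext (_ | n) <;> simp [coeff_C]

lemma coeff_one_sub_C_mul_X_mul (a : ℂ) (f : ℂ⟦X⟧) (j : ℕ) :
    coeff (j + 1) ((1 - C a * X) * f) = coeff (j + 1) f - a * coeff j f := by
  rw [sub_mul, one_mul, map_sub, mul_assoc, coeff_C_mul, coeff_succ_X_mul]

lemma coeff_one_one_sub_mul_one_sub_mul (a b : ℂ) (f : ℂ⟦X⟧) :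
    coeff 1 ((1 - C a * X) * (1 - C b * X) * f) = coeff 1 f - (a + b) * coeff 0 f := by
  rw [mul_assoc, coeff_one_sub_C_mul_X_mul, coeff_one_sub_C_mul_X_mul]
  simp only [zero_add, coeff_zero_eq_constantCoeff, map_mul, map_sub, constantCoeff_one,
    constantCoeff_C, constantCoeff_X, mul_zero, sub_zero, one_mul]
  ring

lemma coeff_add_two_one_sub_mul_one_sub_mul (a b : ℂ) (f : ℂ⟦X⟧) (j : ℕ) :
    coeff (j + 2) ((1 - C a * X) * (1 - C b * X) * f) =
      coeff (j + 2) f - (a + b) * coeff (j + 1) f + a * b * coeff j f := by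
  rw [mul_assoc, coeff_one_sub_C_mul_X_mul, coeff_one_sub_C_mul_X_mul, coeff_one_sub_C_mul_X_mul]
  ring

lemma coeff_X_mul_C_add_C_mul_X_mul (d e : ℂ) (g : ℂ⟦X⟧) (j : ℕ) :
    coeff (j + 1) (X * (C d + C e * X) * g) = d * coeff j g + e * coeff j (X * g) := by
  rw [mul_assoc, coeff_succ_X_mul, add_mul, map_add, coeff_C_mul, mul_assoc, coeff_C_mul]

/-- The expansion of `1 / ((1 - aX)(1 - aqX) ⋯ (1 - aqⁿX))`. -/
noncomputable def pochhammerInvSeries (q a : ℂ) (n : ℕ) : ℂ⟦X⟧ :=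
  mk fun j => a ^ j * qbinom q (n + j) j

/-- By the `q`-binomial theorem this is `(d + cqX)(d + cq²X) ⋯ (d + cqⁿX)`. -/
noncomputable def qBinomialSeries (q c d : ℂ) (n : ℕ) : ℂ⟦X⟧ :=
  mk fun l => c ^ l * d ^ (n - l) * q ^ (l * (l + 1) / 2) * qbinom q n l

lemma one_sub_C_mul_X_mul_pochhammerInvSeries_zero {q : ℂ} (hq : ∀ k : ℕ, q ^ (k + 1) ≠ 1)
    (a : ℂ) : (1 - C a * X) * pochhammerInvSeries q a 0 = 1 := by
  ext (_ | j)
  · simp [pochhammerInvSeries, qbinom_self hq]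
  · simp only [coeff_one_sub_C_mul_X_mul, pochhammerInvSeries, coeff_mk, Nat.zero_add,
      qbinom_self hq, coeff_one, Nat.add_one_ne_zero, if_false, pow_succ]
    ring

lemma one_sub_C_mul_X_mul_pochhammerInvSeries_succ {q : ℂ} (hq : ∀ k : ℕ, q ^ (k + 1) ≠ 1)
    (a : ℂ) (n : ℕ) :
    (1 - C a * X) * pochhammerInvSeries q a (n + 1) = rescale q (pochhammerInvSeries q a n) := by
  ext (_ | j)
  · simp [pochhammerInvSeries, qbinom_zero_right hq]
  · simp only [coeff_one_sub_C_mul_X_mul, pochhammerInvSeries, coeff_rescale, coeff_mk]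
    rw [show n + 1 + (j + 1) = n + 1 + j + 1 by ring, qbinom_succ_succ hq,
      Nat.add_right_comm n 1 j, ← Nat.add_assoc n j 1]
    ring

lemma qBinomialSeries_zero (q c d : ℂ) : qBinomialSeries q c d 0 = 1 := by
  ext (_ | l)
  · simp [qBinomialSeries, qbinom]
  · simp [qBinomialSeries, qbinom_of_lt]

lemma qBinomialSeries_succ {q : ℂ} (hq : ∀ k : ℕ, q ^ (k + 1) ≠ 1) (c d : ℂ) (n : ℕ) :
    qBinomialSeries q c d (n + 1) =
      (C d + C (c * q) * X) * rescale q (qBinomialSeries q c d n) := by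
  ext l
  rw [add_mul, map_add, mul_assoc, coeff_C_mul, coeff_C_mul]
  rcases l with _ | l
  · simp [qBinomialSeries, coeff_zero_X_mul, qbinom_zero_right hq, pow_succ, mul_comm]
  · simp only [qBinomialSeries, coeff_succ_X_mul, coeff_rescale, coeff_mk]
    rw [qbinom_succ_succ hq, triangle_succ, Nat.add_sub_add_right]
    rcases Nat.lt_or_ge n (l + 1) with h | h
    · rw [qbinom_of_lt q h, Nat.sub_eq_zero_of_le (Nat.lt_succ_iff.1 h)]
      ring
    · rw [show n - l = n - (l + 1) + 1 by omega]
      ring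

noncomputable def seriesTerm (q a b c d : ℂ) (n : ℕ) : ℂ⟦X⟧ :=
  C (q ^ (n * (n + 3) / 2)) * X ^ n * qBinomialSeries q c d n * pochhammerInvSeries q a n *
    pochhammerInvSeries q b n

noncomputable def seriesSum (q a b c d : ℂ) (M : ℕ) : ℂ⟦X⟧ :=
  ∑ n ∈ range M, seriesTerm q a b c d n

noncomputable def seriesCoeff (q a b c d : ℂ) (m : ℕ) : ℂ :=
  coeff m (seriesSum q a b c d (m + 1))

lemma mul_seriesTerm_zero {q : ℂ} (hq : ∀ k : ℕ, q ^ (k + 1) ≠ 1) (a b c d : ℂ) :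
    (1 - C a * X) * (1 - C b * X) * seriesTerm q a b c d 0 = 1 := by
  calc (1 - C a * X) * (1 - C b * X) * seriesTerm q a b c d 0
      = ((1 - C a * X) * pochhammerInvSeries q a 0) *
          ((1 - C b * X) * pochhammerInvSeries q b 0) := by
        simp only [seriesTerm, qBinomialSeries_zero, Nat.zero_mul, Nat.zero_div, pow_zero, map_one]
        ring
    _ = 1 := by
        rw [one_sub_C_mul_X_mul_pochhammerInvSeries_zero hq,
          one_sub_C_mul_X_mul_pochhammerInvSeries_zero hq, one_mul]

lemma mul_seriesTerm_succ {q : ℂ} (hq : ∀ k : ℕ, q ^ (k + 1) ≠ 1) (a b c d : ℂ) (n : ℕ) :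
    (1 - C a * X) * (1 - C b * X) * seriesTerm q a b c d (n + 1) =
      C (q ^ 2) * (X * (C d + C (c * q) * X) * rescale q (seriesTerm q a b c d n)) := by
  have hexp : (n + 1) * (n + 1 + 3) / 2 = n * (n + 3) / 2 + n + 2 := by
    rw [show (n + 1) * (n + 1 + 3) = n * (n + 3) + 2 * (n + 2) by ring,
      Nat.add_mul_div_left _ _ two_pos]
    ring
  calc (1 - C a * X) * (1 - C b * X) * seriesTerm q a b c d (n + 1)
      = C (q ^ ((n + 1) * (n + 1 + 3) / 2)) * X ^ (n + 1) * qBinomialSeries q c d (n + 1) *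
          ((1 - C a * X) * pochhammerInvSeries q a (n + 1)) *
          ((1 - C b * X) * pochhammerInvSeries q b (n + 1)) := by
        rw [seriesTerm]; ring
    _ = C (q ^ 2) * (X * (C d + C (c * q) * X) * rescale q (seriesTerm q a b c d n)) := by
        rw [qBinomialSeries_succ hq, one_sub_C_mul_X_mul_pochhammerInvSeries_succ hq,
          one_sub_C_mul_X_mul_pochhammerInvSeries_succ hq, seriesTerm, hexp]
        simp only [map_mul, map_pow, rescale_X, rescale_C, pow_add]
        ring

lemma mul_seriesSum_succ {q : ℂ} (hq : ∀ k : ℕ, q ^ (k + 1) ≠ 1) (a b c d : ℂ) (M : ℕ) :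
    (1 - C a * X) * (1 - C b * X) * seriesSum q a b c d (M + 1) =
      1 + C (q ^ 2) * (X * (C d + C (c * q) * X) * rescale q (seriesSum q a b c d M)) := by
  rw [seriesSum, sum_range_succ', mul_add, mul_seriesTerm_zero hq, mul_sum, seriesSum, map_sum,
    mul_sum, mul_sum, add_comm]
  simp only [mul_seriesTerm_succ hq]

lemma coeff_seriesTerm_of_lt (q a b c d : ℂ) {m n : ℕ} (h : m < n) :
    coeff m (seriesTerm q a b c d n) = 0 := by
  rw [seriesTerm, mul_comm (C _), mul_assoc, mul_assoc, mul_assoc, coeff_X_pow_mul',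
    if_neg (by omega)]

lemma coeff_seriesSum (q a b c d : ℂ) {m M : ℕ} (h : m < M) :
    coeff m (seriesSum q a b c d M) = seriesCoeff q a b c d m := by
  simp only [seriesCoeff, seriesSum, map_sum]
  exact (sum_subset (range_subset_range.2 h) fun n _ hn =>
    coeff_seriesTerm_of_lt q a b c d (by simpa using hn)).symm

lemma seriesCoeff_zero {q : ℂ} (hq : ∀ k : ℕ, q ^ (k + 1) ≠ 1) (a b c d : ℂ) :
    seriesCoeff q a b c d 0 = 1 := by
  simpa [seriesCoeff] using congrArg (coeff 0) (mul_seriesSum_succ hq a b c d 0)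

lemma seriesCoeff_one {q : ℂ} (hq : ∀ k : ℕ, q ^ (k + 1) ≠ 1) (a b c d : ℂ) :
    seriesCoeff q a b c d 1 = a + b + d * q ^ 2 := by
  have h := congrArg (coeff 1) (mul_seriesSum_succ hq a b c d 1)
  rw [coeff_one_one_sub_mul_one_sub_mul, map_add, coeff_C_mul, coeff_X_mul_C_add_C_mul_X_mul,
    coeff_zero_X_mul, coeff_one, if_neg one_ne_zero, coeff_rescale,
    coeff_seriesSum q a b c d (by norm_num : 1 < 2),
    coeff_seriesSum q a b c d (by norm_num : 0 < 2),
    coeff_seriesSum q a b c d (by norm_num : 0 < 1), seriesCoeff_zero hq] at h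
  linear_combination h

lemma seriesCoeff_add_two {q : ℂ} (hq : ∀ k : ℕ, q ^ (k + 1) ≠ 1) (a b c d : ℂ) (m : ℕ) :
    seriesCoeff q a b c d (m + 2) = (a + b + d * q ^ (m + 3)) * seriesCoeff q a b c d (m + 1) +
      (-(a * b) + c * q ^ (m + 3)) * seriesCoeff q a b c d m := by
  have h := congrArg (coeff (m + 2)) (mul_seriesSum_succ hq a b c d (m + 2))
  rw [coeff_add_two_one_sub_mul_one_sub_mul, map_add, coeff_C_mul, coeff_X_mul_C_add_C_mul_X_mul,
    coeff_succ_X_mul, coeff_one, if_neg (by omega), coeff_rescale, coeff_rescale,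
    coeff_seriesSum q a b c d (by omega : m + 2 < m + 3),
    coeff_seriesSum q a b c d (by omega : m + 1 < m + 3),
    coeff_seriesSum q a b c d (by omega : m < m + 3),
    coeff_seriesSum q a b c d (by omega : m + 1 < m + 2),
    coeff_seriesSum q a b c d (by omega : m < m + 2)] at h
  linear_combination h

lemma coeff_seriesTerm (q a b c d : ℂ) {m n : ℕ} (h : n ≤ m) :
    coeff m (seriesTerm q a b c d n) =
      ∑ j ∈ range (m + 1 - n), ∑ l ∈ range (m + 1 - n - j),
        a ^ j * b ^ (m - n - j - l) * c ^ l * d ^ (n - l) *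
          q ^ (n * (n + 3) / 2 + l * (l + 1) / 2) *
          qbinom q (n + j) j * qbinom q (m - j - l) n * qbinom q n l := by
  rw [seriesTerm, mul_comm (C _), mul_assoc, mul_assoc, mul_assoc, coeff_X_pow_mul', if_pos h,
    coeff_C_mul]
  simp only [coeff_mul, Nat.sum_antidiagonal_eq_sum_range_succ_mk, mul_sum]
  rw [show (m - n).succ = m + 1 - n by omega]
  refine sum_comm' (fun l j => ?_) |>.trans (sum_congr rfl fun j hj => sum_congr rfl fun l hl => ?_)
  · simp only [mem_range]; omega
  simp only [mem_range] at hj hl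
  simp only [qBinomialSeries, pochhammerInvSeries, coeff_mk]
  rw [show m - n - l - j = m - n - j - l by omega, ← qbinom_add_symm q n (m - n - j - l),
    show n + (m - n - j - l) = m - j - l by omega, pow_add]
  ring

lemma seriesCoeff_eq_sum (q a b c d : ℂ) (m : ℕ) :
    seriesCoeff q a b c d m =
      ∑ n ∈ range (m + 1), ∑ j ∈ range (m + 1 - n), ∑ l ∈ range (m + 1 - n - j),
        a ^ j * b ^ (m - n - j - l) * c ^ l * d ^ (n - l) *
          q ^ (n * (n + 3) / 2 + l * (l + 1) / 2) *
          qbinom q (n + j) j * qbinom q (m - j - l) n * qbinom q n l := by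
  rw [seriesCoeff, seriesSum, map_sum]
  exact sum_congr rfl fun n hn => coeff_seriesTerm q a b c d (Nat.lt_succ_iff.1 (mem_range.1 hn))

lemma eq_mul_seriesCoeff_of_rec {q : ℂ} (hq : ∀ k : ℕ, q ^ (k + 1) ≠ 1) (a b c d : ℂ)
    (D : ℕ → ℂ) (hD0 : D 0 = 1) (hD1 : D 1 = 0)
    (hD : ∀ N : ℕ, 1 ≤ N →
      D (N + 1) = (a + b + d * q ^ N) * D N + (-(a * b) + c * q ^ N) * D (N - 1))
    (m : ℕ) : D (m + 2) = (c * q - a * b) * seriesCoeff q a b c d m := by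
  have hD2 : D 2 = c * q - a * b := by
    rw [hD 1 le_rfl, Nat.sub_self, hD0, hD1]; ring
  induction m using Nat.twoStepInduction with
  | zero => rw [hD2, seriesCoeff_zero hq, mul_one]
  | one =>
    rw [hD 2 (by norm_num), hD2, show 2 - 1 = 1 from rfl, hD1, seriesCoeff_one hq]; ring
  | more m ih₀ ih₁ =>
    rw [hD (m + 3) (by omega), show m + 3 - 1 = m + 2 from rfl, ih₀, ih₁,
      seriesCoeff_add_two hq]
    ring

lemma pow_succ_ne_one_of_norm_lt_one {q : ℂ} (hq : ‖q‖ < 1) (k : ℕ) : q ^ (k + 1) ≠ 1 :=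
  fun h => (pow_lt_one₀ (norm_nonneg q) hq k.succ_ne_zero).ne (by rw [← norm_pow, h, norm_one])

/-- Explicit formula for the denominator convergents of `H(a,b,c,d,q)`: for `N ≥ 2`,
`B_N = A_N + (cq - ab) Σ_{j,l,n} a^j b^{N-2-n-j-l} c^l d^{n-l} q^{n(n+3)/2+l(l+1)/2}
[n+j, j]_q [N-2-j-l, n]_q [n, l]_q`, summed over `n + j + l ≤ N - 2`. -/
theorem stmt12 (q a b c d : ℂ) (hq : ‖q‖ < 1) (A B : ℕ → ℂ)
    (hA0 : A 0 = 0) (hA1 : A 1 = 1)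
    (hArec : ∀ N : ℕ, 1 ≤ N →
      A (N + 1) = (a + b + d * q ^ N) * A N + (-(a * b) + c * q ^ N) * A (N - 1))
    (hB0 : B 0 = 1) (hB1 : B 1 = 1)
    (hBrec : ∀ N : ℕ, 1 ≤ N →
      B (N + 1) = (a + b + d * q ^ N) * B N + (-(a * b) + c * q ^ N) * B (N - 1)) :
    ∀ N : ℕ, 2 ≤ N →
      B N = A N + (c * q - a * b) *
        ∑ n ∈ range (N - 1), ∑ j ∈ range (N - 1 - n), ∑ l ∈ range (N - 1 - n - j),
          a ^ j * b ^ (N - 2 - n - j - l) * c ^ l * d ^ (n - l) *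
            q ^ (n * (n + 3) / 2 + l * (l + 1) / 2) *
            qbinom q (n + j) j * qbinom q (N - 2 - j - l) n * qbinom q n l := by
  intro N hN
  obtain ⟨m, rfl⟩ := Nat.exists_eq_add_of_le' hN
  have hdiff := eq_mul_seriesCoeff_of_rec (pow_succ_ne_one_of_norm_lt_one hq) a b c d
    (fun N => B N - A N) (by rw [hB0, hA0, sub_zero]) (by rw [hB1, hA1, sub_self])
    (fun N hN => by rw [hBrec N hN, hArec N hN]; ring) m
  rw [show m + 2 - 1 = m + 1 from rfl, Nat.add_sub_cancel, ← seriesCoeff_eq_sum]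
  linear_combination hdiff
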